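/- (Monotonicity of the u-subdifferential under the reverse Spence–Mirrlees condition.) Suppose u is continuously twice differentiable and, for each fixed y, z ↦ ∂u/∂y(y,z) is strictly decreasing, and for each fixed z, y ↦ ∂u/∂z(y,z) is strictly decreasing. Let f : D_y → ℝ, let y, ŷ ∈ D_y with y < ŷ, and suppose z ∈ ∂^u f(y) and ẑ ∈ ∂^u f(ŷ). Then z ≥ ẑ. -/

import Mathlib

open Set

/-- The `u`-dual of a real-valued function `f` on `Dy`:
`f^u(z) = sup_{y ∈ Dy} (u(y,z) - f(y))`, valued in `EReal`. -/
noncomputable def uDual (Dy : Set ℝ) (u : ℝ → ℝ → ℝ) (f : ℝ → ℝ) (z : ℝ) : EReal :=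
  ⨆ y ∈ Dy, ((u y z : EReal) - (f y : EReal))

/-- The `u`-subdifferential of `f` at `y`:
`∂^u f(y) = { z ∈ Dz : f(y) + f^u(z) = u(y,z) }`. -/
def uSubdiff (Dy Dz : Set ℝ) (u : ℝ → ℝ → ℝ) (f : ℝ → ℝ) (y : ℝ) : Set ℝ :=
  {z | z ∈ Dz ∧ (f y : EReal) + uDual Dy u f z = (u y z : EReal)}

/-- The reverse Spence–Mirrlees condition: `u` is C², `z ↦ u_y(y,z)` is strictly
decreasing on `Dz` for each `y ∈ Dy`, and `y ↦ u_z(y,z)` is strictly decreasing on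
`Dy` for each `z ∈ Dz`. -/
def ReverseSpenceMirrlees (Dy Dz : Set ℝ) (u : ℝ → ℝ → ℝ) : Prop :=
  ContDiff ℝ 2 (Function.uncurry u) ∧
  (∀ y ∈ Dy, StrictAntiOn (fun z => deriv (fun y' => u y' z) y) Dz) ∧
  (∀ z ∈ Dz, StrictAntiOn (fun y => deriv (fun z' => u y z') z) Dy)

/-!
Proof idea: a point `z ∈ ∂^u f(y)` makes `y` maximise `y' ↦ u(y',z) - f(y')` over `Dy`.
Comparing the two maximality conditions at `y` and `yh` gives
`u(yh,z) - u(y,z) ≤ u(yh,zh) - u(y,zh)`. If `z < zh`, the reverse Spence–Mirrlees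
condition makes `s ↦ u(s,z) - u(s,zh)` strictly increasing on `[y, yh] ⊆ Dy`, which contradicts
that inequality.
-/

lemma sub_lt_sub_of_deriv_lt {g h : ℝ → ℝ} {a b : ℝ} (hab : a < b)
    (hg : ContinuousOn g (Icc a b)) (hh : ContinuousOn h (Icc a b))
    (hg' : DifferentiableOn ℝ g (Ioo a b)) (hh' : DifferentiableOn ℝ h (Ioo a b))
    (hlt : ∀ s ∈ Ioo a b, deriv h s < deriv g s) :
    h b - h a < g b - g a := by
  have hmono : StrictMonoOn (g - h) (Icc a b) := by
    refine strictMonoOn_of_deriv_pos (convex_Icc a b) (hg.sub hh) fun s hs => ?_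
    rw [interior_Icc] at hs
    have hs' : Ioo a b ∈ nhds s := isOpen_Ioo.mem_nhds hs
    rw [deriv_sub ((hg' s hs).differentiableAt hs') ((hh' s hs).differentiableAt hs')]
    exact sub_pos.2 (hlt s hs)
  have := hmono (left_mem_Icc.2 hab.le) (right_mem_Icc.2 hab.le) hab
  simp only [Pi.sub_apply] at this
  linarith

lemma sub_le_sub_of_mem_uSubdiff {Dy Dz : Set ℝ} {u : ℝ → ℝ → ℝ} {f : ℝ → ℝ} {y z y' : ℝ}
    (hz : z ∈ uSubdiff Dy Dz u f y) (hy' : y' ∈ Dy) :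
    u y' z - f y' ≤ u y z - f y := by
  have hle : ((u y' z - f y' : ℝ) : EReal) ≤ uDual Dy u f z := by
    rw [EReal.coe_sub]
    exact le_iSup₂ (f := fun y'' (_ : y'' ∈ Dy) => (u y'' z : EReal) - f y'') y' hy'
  have hsum : ((f y + (u y' z - f y') : ℝ) : EReal) ≤ u y z := by
    calc ((f y + (u y' z - f y') : ℝ) : EReal)
        = (f y : EReal) + ((u y' z - f y' : ℝ) : EReal) := EReal.coe_add _ _
      _ ≤ (f y : EReal) + uDual Dy u f z := add_le_add_right hle _
      _ = u y z := hz.2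
  linarith [EReal.coe_le_coe_iff.1 hsum]

lemma differentiable_uncurry_left {u : ℝ → ℝ → ℝ}
    (hu : Differentiable ℝ (Function.uncurry u)) (z : ℝ) :
    Differentiable ℝ fun y => u y z :=
  hu.comp (differentiable_id.prodMk (differentiable_const z))

lemma ReverseSpenceMirrlees.sub_lt_sub {Dy Dz : Set ℝ} {u : ℝ → ℝ → ℝ}
    (hSM : ReverseSpenceMirrlees Dy Dz u) (hDy : Dy.OrdConnected)
    {y yh z zh : ℝ} (hy : y ∈ Dy) (hyh : yh ∈ Dy) (hlt : y < yh)
    (hz : z ∈ Dz) (hzh : zh ∈ Dz) (hzlt : z < zh) :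
    u yh zh - u y zh < u yh z - u y z := by
  have hu : Differentiable ℝ (Function.uncurry u) := hSM.1.differentiable (by norm_num)
  have hdz := differentiable_uncurry_left hu z
  have hdzh := differentiable_uncurry_left hu zh
  refine sub_lt_sub_of_deriv_lt hlt hdz.continuous.continuousOn hdzh.continuous.continuousOn
    hdz.differentiableOn hdzh.differentiableOn fun s hs => ?_
  exact hSM.2.1 s (hDy.out hy hyh (Ioo_subset_Icc_self hs)) hz hzh hzlt

theorem uSubdiff_antitone_of_reverseSpenceMirrlees_general
    (Dy Dz : Set ℝ)
    (hDyI : Dy.OrdConnected)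
    (u : ℝ → ℝ → ℝ) (hSM : ReverseSpenceMirrlees Dy Dz u) (f : ℝ → ℝ)
    (y yh : ℝ) (hy : y ∈ Dy) (hyh : yh ∈ Dy) (hlt : y < yh)
    (z zh : ℝ) (hz : z ∈ uSubdiff Dy Dz u f y) (hzh : zh ∈ uSubdiff Dy Dz u f yh) :
    zh ≤ z := by
  by_contra! hzlt
  have hcross := hSM.sub_lt_sub hDyI hy hyh hlt hz.1 hzh.1 hzlt
  have hmax_y := sub_le_sub_of_mem_uSubdiff hz hyh
  have hmax_yh := sub_le_sub_of_mem_uSubdiff hzh hy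
  linarith

/-- Antitonicity of the `u`-subdifferential under the reverse Spence–Mirrlees
condition: if `y < yh`, `z ∈ ∂^u f(y)` and `zh ∈ ∂^u f(yh)`, then `z ≥ zh`. -/
theorem uSubdiff_antitone_of_reverseSpenceMirrlees
    (Dy Dz : Set ℝ) (hDy : Dy.Nonempty) (hDz : Dz.Nonempty)
    (hDyI : Dy.OrdConnected) (hDzI : Dz.OrdConnected)
    (u : ℝ → ℝ → ℝ) (hSM : ReverseSpenceMirrlees Dy Dz u) (f : ℝ → ℝ)
    (y yh : ℝ) (hy : y ∈ Dy) (hyh : yh ∈ Dy) (hlt : y < yh)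
    (z zh : ℝ) (hz : z ∈ uSubdiff Dy Dz u f y) (hzh : zh ∈ uSubdiff Dy Dz u f yh) :
    zh ≤ z :=
  uSubdiff_antitone_of_reverseSpenceMirrlees_general Dy Dz hDyI u hSM f y yh hy hyh hlt z zh hz hzh
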